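/- The low-noise decay exponent of the union–Bhattacharyya bound equals d: lim_{σ²→0⁺} ( −log P̄_e(σ²) / log(1/σ²) ) = d, where d = min_{i≠j} d(i,j). (Consequence of the paper's Lemma 1, since the leading coefficient g in the expansion is strictly positive.) -/

import Mathlib

open Matrix Filter Topology
open scoped Classical

/-- The Bhattacharyya exponent `K_{ij}(σ²)` for zero-mean Gaussian classes with
covariances `A`, `B`, measurement matrix `Φ` and noise variance `s = σ²`. -/
noncomputable def Kexp {M N : ℕ} (Φ : Matrix (Fin M) (Fin N) ℝ)
    (A B : Matrix (Fin N) (Fin N) ℝ) (s : ℝ) : ℝ :=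
  (1 / 4) * Real.log
    ((((1 : ℝ) / 2) • (Φ * (A + B) * Φᵀ + (2 * s) • (1 : Matrix (Fin M) (Fin M) ℝ))).det ^ 2 /
      ((Φ * A * Φᵀ + s • (1 : Matrix (Fin M) (Fin M) ℝ)).det *
        (Φ * B * Φᵀ + s • (1 : Matrix (Fin M) (Fin M) ℝ)).det))

/-- The union–Bhattacharyya upper bound `P̄_e(σ²)` on the misclassification probability. -/
noncomputable def Pbar {M N L : ℕ} (Φ : Matrix (Fin M) (Fin N) ℝ)
    (S : Fin L → Matrix (Fin N) (Fin N) ℝ) (p : Fin L → ℝ) (s : ℝ) : ℝ :=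
  ∑ i, ∑ j ∈ Finset.univ.filter (fun j => j ≠ i),
    Real.sqrt (p i * p j) * Real.exp (-Kexp Φ (S i) (S j) s)

/-- The pairwise low-noise decay exponent `d(i,j) = (2 r_{ij} - r_i - r_j)/4`. -/
noncomputable def dExp {M N : ℕ} (Φ : Matrix (Fin M) (Fin N) ℝ)
    (A B : Matrix (Fin N) (Fin N) ℝ) : ℝ :=
  (2 * ((Φ * (A + B) * Φᵀ).rank : ℝ) - (Φ * A * Φᵀ).rank - (Φ * B * Φᵀ).rank) / 4

/-- Pseudo-determinant of a symmetric matrix: product of its nonzero eigenvalues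
(equal to `1` for the zero matrix). -/
noncomputable def pdet {n : ℕ} (S : Matrix (Fin n) (Fin n) ℝ) : ℝ :=
  if h : S.IsHermitian then
    ∏ k, if h.eigenvalues k = 0 then 1 else h.eigenvalues k
  else 0

noncomputable def fnz {m : ℕ} (C : Matrix (Fin m) (Fin m) ℝ) (s : ℝ) : ℝ :=
  if h : C.IsHermitian then
    ∏ k, (if h.eigenvalues k = 0 then 1 else h.eigenvalues k + s)
  else 1

lemma det_add_smul_one {m : ℕ} {C : Matrix (Fin m) (Fin m) ℝ} (hC : C.IsHermitian) (s : ℝ) :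
    (C + s • 1).det = ∏ k, (hC.eigenvalues k + s) := by
  have hU := (Matrix.mem_unitaryGroup_iff).mp (hC.eigenvectorUnitary).2
  set U : Matrix (Fin m) (Fin m) ℝ := (hC.eigenvectorUnitary : Matrix (Fin m) (Fin m) ℝ) with hUdef
  have h1 : C + s • 1 = U * (diagonal (fun k => hC.eigenvalues k + s)) * star U := by
    have hsp := hC.spectral_theorem
    rw [Unitary.conjStarAlgAut_apply, ← hUdef] at hsp
    have hdiag : (diagonal (fun k => hC.eigenvalues k + s) : Matrix (Fin m) (Fin m) ℝ)
        = diagonal (RCLike.ofReal ∘ hC.eigenvalues) + s • 1 := by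
      ext i j
      by_cases h : i = j <;>
        simp [Matrix.diagonal, Matrix.one_apply, Matrix.smul_apply, h]
    rw [hdiag, Matrix.mul_add, Matrix.add_mul]
    rw [Matrix.mul_smul, Matrix.smul_mul, Matrix.mul_one, hU, ← hsp]
  rw [h1, Matrix.det_mul, Matrix.det_mul, mul_comm, ← mul_assoc, ← Matrix.det_mul,
    (Matrix.mem_unitaryGroup_iff').mp (hC.eigenvectorUnitary).2]
  simp [Matrix.det_diagonal]

lemma fnz_zero {m : ℕ} {C : Matrix (Fin m) (Fin m) ℝ} (hC : C.IsHermitian) :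
    fnz C 0 = pdet C := by
  rw [fnz, pdet, dif_pos hC, dif_pos hC]
  exact Finset.prod_congr rfl fun k _ => by split <;> simp

lemma fnz_pos {m : ℕ} {C : Matrix (Fin m) (Fin m) ℝ} (hC : C.PosSemidef) {s : ℝ}
    (hs : 0 ≤ s) : 0 < fnz C s := by
  rw [fnz, dif_pos hC.isHermitian]
  refine Finset.prod_pos fun k _ => ?_
  split
  · norm_num
  · have h1 := hC.eigenvalues_nonneg k
    rename_i h2
    have : 0 < hC.isHermitian.eigenvalues k := lt_of_le_of_ne h1 (Ne.symm h2)
    linarith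

lemma pdet_pos {m : ℕ} {C : Matrix (Fin m) (Fin m) ℝ} (hC : C.PosSemidef) :
    0 < pdet C := fnz_zero hC.isHermitian ▸ fnz_pos hC le_rfl

lemma fnz_continuous {m : ℕ} (C : Matrix (Fin m) (Fin m) ℝ) : Continuous (fnz C) := by
  unfold fnz
  split
  · exact continuous_finset_prod _ fun k _ => by split <;> fun_prop
  · exact continuous_const

lemma rank_le' {m : ℕ} (C : Matrix (Fin m) (Fin m) ℝ) : C.rank ≤ m := by
  simpa using C.rank_le_card_width

lemma det_add_smul {m : ℕ} {C : Matrix (Fin m) (Fin m) ℝ} (hC : C.PosSemidef) (s : ℝ) :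
    (C + s • 1).det = s ^ (m - C.rank) * fnz C s := by
  have h := det_add_smul_one hC.isHermitian s
  rw [h, fnz, dif_pos hC.isHermitian]
  have hsplit : ∀ k : Fin m, hC.isHermitian.eigenvalues k + s =
      (if hC.isHermitian.eigenvalues k = 0 then s else hC.isHermitian.eigenvalues k + s) := by
    intro k; split <;> simp_all
  rw [Finset.prod_congr rfl fun k _ => hsplit k, Finset.prod_ite]
  have hcard : (Finset.univ.filter fun k => hC.isHermitian.eigenvalues k = 0).card
      = m - C.rank := by
    have h1 : C.rank = (Finset.univ.filter fun k => ¬ hC.isHermitian.eigenvalues k = 0).card := by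
      rw [hC.isHermitian.rank_eq_card_non_zero_eigs, Fintype.card_subtype]
    have h2 := Finset.card_filter_add_card_filter_not
      (s := (Finset.univ : Finset (Fin m)))
      (p := fun k => hC.isHermitian.eigenvalues k = 0)
    simp only [Finset.card_univ, Fintype.card_fin] at h2
    omega
  rw [Finset.prod_const, hcard]
  congr 1
  rw [Finset.prod_ite, Finset.prod_const_one, one_mul]

lemma psd_sandwich {M N : ℕ} (Φ : Matrix (Fin M) (Fin N) ℝ) {A : Matrix (Fin N) (Fin N) ℝ}
    (hA : A.PosSemidef) : (Φ * A * Φᵀ).PosSemidef := by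
  have := hA.mul_mul_conjTranspose_same Φ
  rwa [Matrix.conjTranspose_eq_transpose_of_trivial] at this

lemma pair_exp {M N : ℕ} (Φ : Matrix (Fin M) (Fin N) ℝ) (A B : Matrix (Fin N) (Fin N) ℝ)
    (hA : A.PosSemidef) (hB : B.PosSemidef) :
    ∃ q : ℝ → ℝ, ContinuousAt q 0 ∧ (∀ s, 0 ≤ s → 0 < q s) ∧
      ∀ s, 0 < s → Real.exp (-Kexp Φ A B s) = s ^ dExp Φ A B * q s := by
  set XA := Φ * A * Φᵀ with hXA
  set XB := Φ * B * Φᵀ with hXB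
  set XAB := Φ * (A + B) * Φᵀ with hXAB
  have hpA : XA.PosSemidef := psd_sandwich Φ hA
  have hpB : XB.PosSemidef := psd_sandwich Φ hB
  have hpAB : XAB.PosSemidef := psd_sandwich Φ (hA.add hB)
  set ra := XA.rank
  set rb := XB.rank
  set rab := XAB.rank
  set qq : ℝ → ℝ := fun s =>
    ((1/2:ℝ)^M * 2^(M - rab) * fnz XAB (2*s))^2 / (fnz XA s * fnz XB s) with hqq
  have hqq_pos : ∀ s, 0 ≤ s → 0 < qq s := by
    intro s hs
    apply div_pos
    · have h2s : (0:ℝ) ≤ 2*s := by linarith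
      have := fnz_pos hpAB h2s
      positivity
    · exact mul_pos (fnz_pos hpA hs) (fnz_pos hpB hs)
  have hqq_cont : ContinuousAt qq 0 := by
    apply ContinuousAt.div
    · have : Continuous fun s : ℝ => ((1/2:ℝ)^M * 2^(M - rab) * fnz XAB (2*s))^2 := by
        have h1 : Continuous fun s : ℝ => fnz XAB (2*s) :=
          (fnz_continuous XAB).comp (by fun_prop)
        fun_prop
      exact this.continuousAt
    · exact ((fnz_continuous XA).continuousAt.mul (fnz_continuous XB).continuousAt)
    · exact ne_of_gt (mul_pos (fnz_pos hpA le_rfl) (fnz_pos hpB le_rfl))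
  refine ⟨fun s => (qq s) ^ (-(1/4) : ℝ), ?_, ?_, ?_⟩
  · exact hqq_cont.rpow_const (Or.inl (ne_of_gt (hqq_pos 0 le_rfl)))
  · exact fun s hs => Real.rpow_pos_of_pos (hqq_pos s hs) _
  · intro s hs
    have h2s : (0:ℝ) < 2*s := by linarith
    have hDab : ((1/2:ℝ) • (XAB + (2*s) • (1 : Matrix (Fin M) (Fin M) ℝ))).det
        = (1/2)^M * ((2*s)^(M - rab) * fnz XAB (2*s)) := by
      rw [Matrix.det_smul, det_add_smul hpAB]
      simp
      exact Or.inl rfl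
    have hDa : (XA + s • (1 : Matrix (Fin M) (Fin M) ℝ)).det = s^(M - ra) * fnz XA s :=
      det_add_smul hpA s
    have hDb : (XB + s • (1 : Matrix (Fin M) (Fin M) ℝ)).det = s^(M - rb) * fnz XB s :=
      det_add_smul hpB s
    have hFa := fnz_pos hpA hs.le
    have hFb := fnz_pos hpB hs.le
    have hFab := fnz_pos hpAB h2s.le
    set e : ℝ := ((2*(M - rab) : ℕ) : ℝ) - (((M - ra) + (M - rb) : ℕ) : ℝ) with he
    have hR : (((1/2:ℝ) • (XAB + (2*s) • (1 : Matrix (Fin M) (Fin M) ℝ))).det ^ 2 /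
        ((XA + s • (1 : Matrix (Fin M) (Fin M) ℝ)).det *
          (XB + s • (1 : Matrix (Fin M) (Fin M) ℝ)).det)) = s ^ e * qq s := by
      rw [hDab, hDa, hDb, he, Real.rpow_sub hs, Real.rpow_natCast, Real.rpow_natCast, hqq]
      rw [mul_pow 2 s, pow_mul']
      field_simp
      ring
    have hRpos : (0:ℝ) < s ^ e * qq s := mul_pos (Real.rpow_pos_of_pos hs _) (hqq_pos s hs.le)
    rw [Kexp, hR]
    rw [show -((1/4 : ℝ) * Real.log (s ^ e * qq s)) = Real.log (s ^ e * qq s) * (-(1/4)) by ring,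
      ← Real.rpow_def_of_pos hRpos,
      Real.mul_rpow (Real.rpow_pos_of_pos hs e).le (hqq_pos s hs.le).le,
      ← Real.rpow_mul hs.le]
    congr 1
    have hra : ra ≤ M := rank_le' XA
    have hrb : rb ≤ M := rank_le' XB
    have hrab : rab ≤ M := rank_le' XAB
    rw [dExp, he]
    push_cast [Nat.cast_sub hra, Nat.cast_sub hrb, Nat.cast_sub hrab]
    ring
    rfl

/-- consequence of the paper's Lemma 1. The low-noise decay exponent of
the union–Bhattacharyya bound equals `d = min_{i≠j} d(i,j)`:
`(−log P̄_e(σ²))/log(1/σ²) → d` as `σ² → 0⁺`. -/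
theorem stmt3 {N M L : ℕ} (hN : 1 ≤ N) (hM : 1 ≤ M) (hL : 2 ≤ L)
    (Φ : Matrix (Fin M) (Fin N) ℝ) (S : Fin L → Matrix (Fin N) (Fin N) ℝ)
    (hS : ∀ i, (S i).PosSemidef)
    (p : Fin L → ℝ) (hp : ∀ i, 0 < p i) (hpsum : ∑ i, p i = 1)
    (d : ℝ)
    (hd_le : ∀ i j, i ≠ j → d ≤ dExp Φ (S i) (S j))
    (hd_mem : ∃ i j, i ≠ j ∧ dExp Φ (S i) (S j) = d) :
    Tendsto (fun s : ℝ => -Real.log (Pbar Φ S p s) / Real.log (1 / s))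
      (𝓝[>] (0 : ℝ)) (𝓝 d) := by
  haveI : Nonempty (Fin L) := ⟨⟨0, by omega⟩⟩
  choose q hqc hqpos hqeq using fun i j : Fin L => pair_exp Φ (S i) (S j) (hS i) (hS j)
  set H : ℝ → ℝ := fun s => ∑ i, ∑ j ∈ Finset.univ.filter (fun j => j ≠ i),
    Real.sqrt (p i * p j) * (s ^ (dExp Φ (S i) (S j) - d) * q i j s) with hH
  set G : ℝ := ∑ i, ∑ j ∈ Finset.univ.filter (fun j => j ≠ i),
    Real.sqrt (p i * p j) *
      ((if dExp Φ (S i) (S j) = d then (1:ℝ) else 0) * q i j 0) with hG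
  have hPbar : ∀ s : ℝ, 0 < s → Pbar Φ S p s = s ^ d * H s := by
    intro s hs
    rw [Pbar, hH, Finset.mul_sum]
    refine Finset.sum_congr rfl fun i _ => ?_
    rw [Finset.mul_sum]
    refine Finset.sum_congr rfl fun j hj => ?_
    rw [hqeq i j s hs]
    have : s ^ dExp Φ (S i) (S j) = s ^ d * s ^ (dExp Φ (S i) (S j) - d) := by
      rw [← Real.rpow_add hs]; ring_nf
    rw [this]; ring
  have hsqrt_pos : ∀ i j : Fin L, 0 < Real.sqrt (p i * p j) :=
    fun i j => Real.sqrt_pos.mpr (mul_pos (hp i) (hp j))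
  have hH_pos : ∀ s : ℝ, 0 < s → 0 < H s := by
    intro s hs
    refine Finset.sum_pos (fun i _ => Finset.sum_pos (fun j hj => ?_) ?_) Finset.univ_nonempty
    · exact mul_pos (hsqrt_pos i j)
        (mul_pos (Real.rpow_pos_of_pos hs _) (hqpos i j s hs.le))
    · obtain ⟨j, hj⟩ := Fintype.exists_ne_of_one_lt_card (by simp; omega) i
      exact ⟨j, Finset.mem_filter.mpr ⟨Finset.mem_univ _, hj⟩⟩
  have hHG : Tendsto H (𝓝[>] (0:ℝ)) (𝓝 G) := by
    rw [hH, hG]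
    refine tendsto_finset_sum _ fun i _ => tendsto_finset_sum _ fun j hj => ?_
    have hqt : Tendsto (q i j) (𝓝[>] (0:ℝ)) (𝓝 (q i j 0)) :=
      (hqc i j).tendsto.mono_left nhdsWithin_le_nhds
    by_cases hc : dExp Φ (S i) (S j) = d
    · simp only [hc, sub_self, Real.rpow_zero, if_pos rfl]
      exact tendsto_const_nhds.mul (tendsto_const_nhds.mul hqt)
    · have hij : i ≠ j := fun h => (Finset.mem_filter.mp hj).2 h.symm
      have hcpos : 0 < dExp Φ (S i) (S j) - d :=
        sub_pos.mpr (lt_of_le_of_ne (hd_le i j hij) (Ne.symm hc))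
      have hrt : Tendsto (fun s : ℝ => s ^ (dExp Φ (S i) (S j) - d)) (𝓝[>] (0:ℝ)) (𝓝 0) := by
        have := (Real.continuousAt_rpow_const 0 _ (Or.inr hcpos.le)).tendsto
        rw [Real.zero_rpow (ne_of_gt hcpos)] at this
        exact this.mono_left nhdsWithin_le_nhds
      simp only [if_neg hc]
      have := tendsto_const_nhds.mul (hrt.mul hqt)
        (f := fun _ : ℝ => Real.sqrt (p i * p j))
      simpa using this
  have hG_pos : 0 < G := by
    obtain ⟨i0, j0, hij, hd0⟩ := hd_mem
    have hterm_nonneg : ∀ i j : Fin L, 0 ≤ Real.sqrt (p i * p j) *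
        ((if dExp Φ (S i) (S j) = d then (1:ℝ) else 0) * q i j 0) := by
      intro i j
      exact mul_nonneg (Real.sqrt_nonneg _)
        (mul_nonneg (by split <;> norm_num) (hqpos i j 0 le_rfl).le)
    rw [hG]
    refine Finset.sum_pos' (fun i _ => Finset.sum_nonneg fun j _ => hterm_nonneg i j)
      ⟨i0, Finset.mem_univ _, ?_⟩
    refine Finset.sum_pos' (fun j _ => hterm_nonneg i0 j)
      ⟨j0, Finset.mem_filter.mpr ⟨Finset.mem_univ _, hij.symm⟩, ?_⟩
    rw [if_pos hd0, one_mul]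
    exact mul_pos (hsqrt_pos i0 j0) (hqpos i0 j0 0 le_rfl)
  have hlogH : Tendsto (fun s => Real.log (H s)) (𝓝[>] (0:ℝ)) (𝓝 (Real.log G)) :=
    ((Real.continuousAt_log (ne_of_gt hG_pos)).tendsto).comp hHG
  have hloginv : Tendsto (fun s : ℝ => (Real.log s)⁻¹) (𝓝[>] (0:ℝ)) (𝓝 0) := by
    have h1 : Tendsto (fun s : ℝ => Real.log s) (𝓝[>] (0:ℝ)) atBot :=
      Real.tendsto_log_nhdsGT_zero
    have h2 : Tendsto (fun s : ℝ => -Real.log s) (𝓝[>] (0:ℝ)) atTop :=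
      tendsto_neg_atBot_atTop.comp h1
    have h3 := h2.inv_tendsto_atTop
    have h4 : Tendsto (fun s : ℝ => -(-Real.log s)⁻¹) (𝓝[>] (0:ℝ)) (𝓝 (-0)) := h3.neg
    simp only [inv_neg, neg_neg, neg_zero] at h4
    exact h4
  have hmain : Tendsto (fun s : ℝ => d + Real.log (H s) * (Real.log s)⁻¹)
      (𝓝[>] (0:ℝ)) (𝓝 d) := by
    have := tendsto_const_nhds (x := d) (f := 𝓝[>] (0:ℝ)) |>.add (hlogH.mul hloginv)
    simpa using this
  refine hmain.congr' ?_
  have hev : Set.Ioo (0:ℝ) 1 ∈ 𝓝[>] (0:ℝ) :=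
    Ioo_mem_nhdsGT_of_mem (by constructor <;> norm_num)
  filter_upwards [hev] with s hs
  obtain ⟨hs0, hs1⟩ := hs
  have hlogs_neg : Real.log s < 0 := Real.log_neg hs0 hs1
  have hlogs_ne : Real.log s ≠ 0 := ne_of_lt hlogs_neg
  have hHs := hH_pos s hs0
  rw [hPbar s hs0, Real.log_mul (ne_of_gt (Real.rpow_pos_of_pos hs0 d)) (ne_of_gt hHs),
    Real.log_rpow hs0, one_div, Real.log_inv]
  field_simp [hlogs_ne]
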